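/- (Comparison principle for the half-space operator) Let m > 0 and let w be a C² function on the closed region Ω_R^+ = {(x,y) ∈ [0,∞)×ℝ^N : √(x²+|y|²) ≥ R} satisfying −Δw + m²w ≥ 0 in the interior, w ≥ 0 on the spherical boundary {√(x²+|y|²) = R, x ≥ 0}, w(x,y) → 0 as x+|y| → ∞, and such that at every boundary point (0,y₀) with |y₀| ≥ R where w attains a negative interior minimum, one has −∂w/∂x(0,y₀) ≥ λ w(0,y₀) for some fixed 0 < λ < m. Then w ≥ 0 on all of Ω_R^+. -/

import Mathlib

/-!
Divide by the weight `H(x) = e^{-mx} + δ`, which satisfies `(-∂ₓ² + m²) H = m² δ > 0` and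
`-H'(0) = m > λ (1 + δ) = λ H(0)` once `δ` is small. If `w` takes a negative value, then by the
decay at infinity `w / H` attains a negative minimum `κ` on `Ω_R⁺`, so `w - κ H ≥ 0` touches `0`
at some point `p`. This `p` is not on the sphere, where `w ≥ 0`; not in the interior, where the
second-order conditions give `-Δw + m² w ≤ m² δ κ < 0`; and not on the flat boundary, where `p` is
also a negative minimum of `w` (as `H ≤ H(0)` for `x ≥ 0`) and the one-sided first-order condition
`∂ₓ w(p) ≥ κ H'(0) = -m κ` contradicts `-∂ₓ w(p) ≥ λ w(p) = λ (1 + δ) κ`.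
-/

noncomputable section

/-- Laplacian (sum of pure second directional derivatives) of a function on the
half-space model `ℝ × ℝ^N`. -/
def lapH {N : ℕ} (f : ℝ × EuclideanSpace ℝ (Fin N) → ℝ)
    (z : ℝ × EuclideanSpace ℝ (Fin N)) : ℝ :=
  fderiv ℝ (fun w => fderiv ℝ f w ((1 : ℝ), 0)) z ((1 : ℝ), 0)
    + ∑ i : Fin N,
        fderiv ℝ (fun w => fderiv ℝ f w ((0 : ℝ), EuclideanSpace.single i (1 : ℝ))) z
          ((0 : ℝ), EuclideanSpace.single i (1 : ℝ))

open Filter Topology Set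

lemma IsLocalMin.nonneg_of_hasDerivAt_of_hasDerivAt {g g' : ℝ → ℝ} {a b : ℝ}
    (hmin : IsLocalMin g a) (hg : ∀ t, HasDerivAt g (g' t) t) (hg' : HasDerivAt g' b a) :
    0 ≤ b := by
  by_contra! hb
  have hderiv : deriv g = g' := funext fun t => (hg t).deriv
  -- a negative second derivative makes `a` a local maximum as well, so `g` is locally constant
  have hmax : IsLocalMax g a :=
    isLocalMax_of_deriv_deriv_neg (by rwa [hderiv, hg'.deriv])
      (by rw [hderiv]; exact hmin.hasDerivAt_eq_zero (hg a)) (hg a).continuousAt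
  have hconst : ∀ᶠ t in 𝓝 a, ∀ᶠ s in 𝓝 t, g s = g a :=
    (hmin.and hmax).mono (fun t ht => le_antisymm ht.2 ht.1) |>.eventually_nhds
  have hzero : g' =ᶠ[𝓝 a] fun _ => 0 :=
    hconst.mono fun t ht => (hg t).unique ((hasDerivAt_const t (g a)).congr_of_eventuallyEq ht)
  exact hb.ne ((hg'.congr_of_eventuallyEq hzero.symm).unique (hasDerivAt_const a 0))

lemma IsMinOn.nonneg_of_hasDerivAt {g : ℝ → ℝ} {a d : ℝ} (hmin : IsMinOn g (Ici a) a)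
    (hg : HasDerivAt g d a) : 0 ≤ d := by
  have hcone : (1 : ℝ) ∈ posTangentConeAt (Ici a) a :=
    mem_posTangentConeAt_of_segment_subset
      (segment_subset_Icc (by linarith) |>.trans Icc_subset_Ici_self)
  simpa using hmin.localize.hasFDerivWithinAt_nonneg hg.hasFDerivAt.hasFDerivWithinAt hcone

section LineRestriction

variable {E : Type*} [NormedAddCommGroup E] [NormedSpace ℝ E] {f : E → ℝ} {p e : E}

lemma hasDerivAt_comp_add_smul {t : ℝ} (hf : DifferentiableAt ℝ f (p + t • e)) :
    HasDerivAt (fun s : ℝ => f (p + s • e)) (fderiv ℝ f (p + t • e) e) t :=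
  hf.hasFDerivAt.comp_hasDerivAt t
    (((hasDerivAt_id t).smul_const e).const_add p |>.congr_deriv (one_smul ℝ e))

lemma le_fderiv_fderiv_of_isLocalMin_sub (hf : ContDiff ℝ 2 f) {h h' : ℝ → ℝ} {b : ℝ}
    (hh : ∀ t, HasDerivAt h (h' t) t) (hh' : HasDerivAt h' b 0)
    (hmin : IsLocalMin (fun t => f (p + t • e) - h t) 0) :
    b ≤ fderiv ℝ (fun z => fderiv ℝ f z e) p e := by
  have hdf : Differentiable ℝ (fun z => fderiv ℝ f z e) :=
    ((hf.fderiv_right (m := 1) le_rfl).clm_apply contDiff_const).differentiable one_ne_zero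
  have hsecond : HasDerivAt (fun t : ℝ => fderiv ℝ f (p + t • e) e)
      (fderiv ℝ (fun z => fderiv ℝ f z e) p e) 0 := by
    simpa using hasDerivAt_comp_add_smul (t := 0) (hdf (p + (0 : ℝ) • e))
  have := hmin.nonneg_of_hasDerivAt_of_hasDerivAt
    (fun t => (hasDerivAt_comp_add_smul (hf.differentiable two_ne_zero _)).sub (hh t))
    (hsecond.sub hh')
  linarith

lemma le_fderiv_of_isMinOn_sub (hf : DifferentiableAt ℝ f p) {h : ℝ → ℝ} {d : ℝ}
    (hh : HasDerivAt h d 0) (hmin : IsMinOn (fun t => f (p + t • e) - h t) (Ici 0) 0) :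
    d ≤ fderiv ℝ f p e := by
  have := hmin.nonneg_of_hasDerivAt ((hasDerivAt_comp_add_smul (by simpa using hf)).sub hh)
  simp only [zero_smul, add_zero] at this
  linarith

end LineRestriction

lemma exists_neg_mul_le_of_tendsto_zero {X : Type*} [TopologicalSpace X] {s : Set X}
    {u H : X → ℝ} (hs : IsClosed s) (hu : ContinuousOn u s) (hH : ContinuousOn H s) {δ : ℝ}
    (hδ : 0 < δ) (hHδ : ∀ x ∈ s, δ ≤ H x) (hlim : Tendsto u (cocompact X ⊓ 𝓟 s) (𝓝 0))
    {x₀ : X} (hx₀ : x₀ ∈ s) (hneg : u x₀ < 0) :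
    ∃ p ∈ s, ∃ κ < 0, u p = κ * H p ∧ ∀ x ∈ s, κ * H x ≤ u x := by
  have hHpos : ∀ x ∈ s, 0 < H x := fun x hx => hδ.trans_le (hHδ x hx)
  have hlim' : Tendsto (fun x => u x / H x) (cocompact X ⊓ 𝓟 s) (𝓝 0) := by
    refine hlim.zero_mul_isBoundedUnder_le (isBoundedUnder_of_eventually_le (a := δ⁻¹) ?_)
    filter_upwards [mem_inf_of_right (mem_principal_self s)] with x hx
    simpa [abs_of_pos (hHpos x hx)] using inv_anti₀ hδ (hHδ x hx)
  obtain ⟨p, hp, hpmin⟩ := (hu.div hH fun x hx => (hHpos x hx).ne').exists_isMinOn' hs hx₀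
    ((hlim'.eventually (lt_mem_nhds (div_neg_of_neg_of_pos hneg (hHpos x₀ hx₀)))).mono
      fun _ hx => hx.le)
  refine ⟨p, hp, u p / H p, (hpmin hx₀).trans_lt (div_neg_of_neg_of_pos hneg (hHpos x₀ hx₀)),
    (div_mul_cancel₀ _ (hHpos p hp).ne').symm, fun x hx => ?_⟩
  exact (le_div_iff₀ (hHpos x hx)).1 (hpmin hx)

def expWeight (m δ x : ℝ) : ℝ := Real.exp (-m * x) + δ

lemma continuous_expWeight (m δ : ℝ) : Continuous (expWeight m δ) := by
  unfold expWeight; fun_prop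

lemma hasDerivAt_exp_neg_mul (m x : ℝ) :
    HasDerivAt (fun x => Real.exp (-m * x)) (Real.exp (-m * x) * -m) x :=
  (by simpa using (hasDerivAt_id' x).const_mul (-m) : HasDerivAt (fun x => -m * x) (-m) x).exp

lemma hasDerivAt_expWeight (m δ x : ℝ) :
    HasDerivAt (expWeight m δ) (-m * Real.exp (-m * x)) x :=
  ((hasDerivAt_exp_neg_mul m x).add_const δ).congr_deriv (mul_comm _ _)

lemma hasDerivAt_neg_mul_exp_neg_mul (m x : ℝ) :
    HasDerivAt (fun x => -m * Real.exp (-m * x)) (m ^ 2 * Real.exp (-m * x)) x :=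
  ((hasDerivAt_exp_neg_mul m x).const_mul (-m)).congr_deriv (by ring)

lemma le_expWeight (m δ x : ℝ) : δ ≤ expWeight m δ x :=
  le_add_of_nonneg_left (Real.exp_pos _).le

lemma expWeight_le {m δ x : ℝ} (hm : 0 ≤ m) (hx : 0 ≤ x) : expWeight m δ x ≤ 1 + δ :=
  add_le_add_left (Real.exp_le_one_iff.2 (mul_nonpos_of_nonpos_of_nonneg (neg_nonpos.2 hm) hx)) δ

section HalfSpace

variable {N : ℕ}

lemma le_lapH_of_isLocalMin_sub {w : ℝ × EuclideanSpace ℝ (Fin N) → ℝ} (hw : ContDiff ℝ 2 w)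
    {h h' h'' : ℝ → ℝ} (hh : ∀ x, HasDerivAt h (h' x) x) (hh' : ∀ x, HasDerivAt h' (h'' x) x)
    {p : ℝ × EuclideanSpace ℝ (Fin N)} (hmin : IsLocalMin (fun z => w z - h z.1) p) :
    h'' p.1 ≤ lapH w p := by
  have hline : ∀ e : ℝ × EuclideanSpace ℝ (Fin N),
      IsLocalMin (fun t : ℝ => w (p + t • e) - h (p.1 + t * e.1)) 0 := fun e => by
    have : IsLocalMin ((fun z => w z - h z.1) ∘ fun t : ℝ => p + t • e) 0 :=
      IsLocalMin.comp_continuous (by simpa using hmin) (by fun_prop)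
    simpa [Function.comp_def] using this
  have hx : h'' p.1 ≤ fderiv ℝ (fun z => fderiv ℝ w z ((1 : ℝ), 0)) p ((1 : ℝ), 0) :=
    le_fderiv_fderiv_of_isLocalMin_sub hw (fun t => (hh (p.1 + t)).comp_const_add p.1 t)
      ((hh' (p.1 + 0)).comp_const_add p.1 0 |>.congr_deriv (by simp))
      (by simpa using hline ((1 : ℝ), 0))
  have hy : ∀ i : Fin N, 0 ≤ fderiv ℝ
      (fun z => fderiv ℝ w z ((0 : ℝ), EuclideanSpace.single i (1 : ℝ))) p
      ((0 : ℝ), EuclideanSpace.single i (1 : ℝ)) := fun i =>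
    le_fderiv_fderiv_of_isLocalMin_sub hw (fun t => hasDerivAt_const t (h p.1))
      (hasDerivAt_const 0 0) (by simpa using hline ((0 : ℝ), EuclideanSpace.single i (1 : ℝ)))
  have := Finset.sum_nonneg fun i (_ : i ∈ Finset.univ) => hy i
  rw [lapH]
  linarith

def halfExterior (N : ℕ) (R : ℝ) : Set (ℝ × EuclideanSpace ℝ (Fin N)) :=
  {z | 0 ≤ z.1 ∧ R ≤ Real.sqrt (z.1 ^ 2 + ‖z.2‖ ^ 2)}

lemma continuous_radius :
    Continuous fun z : ℝ × EuclideanSpace ℝ (Fin N) => Real.sqrt (z.1 ^ 2 + ‖z.2‖ ^ 2) := by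
  fun_prop

lemma isClosed_halfExterior (R : ℝ) : IsClosed (halfExterior N R) :=
  (isClosed_le continuous_const continuous_fst).inter
    (isClosed_le continuous_const continuous_radius)

lemma halfExterior_mem_nhds {R : ℝ} {z : ℝ × EuclideanSpace ℝ (Fin N)} (hz₁ : 0 < z.1)
    (hzR : R < Real.sqrt (z.1 ^ 2 + ‖z.2‖ ^ 2)) : halfExterior N R ∈ 𝓝 z := by
  refine mem_of_superset ?_ fun y (hy : 0 < y.1 ∧ R < _) => ⟨hy.1.le, hy.2.le⟩
  exact ((isOpen_lt continuous_const continuous_fst).inter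
    (isOpen_lt continuous_const continuous_radius)).mem_nhds ⟨hz₁, hzR⟩

lemma add_smul_fst_mem_halfExterior {R t : ℝ} {z : ℝ × EuclideanSpace ℝ (Fin N)}
    (hz : z ∈ halfExterior N R) (ht : 0 ≤ t) : z + t • ((1 : ℝ), 0) ∈ halfExterior N R := by
  obtain ⟨hz₁, hzR⟩ := hz
  refine ⟨by simpa using add_nonneg hz₁ ht, hzR.trans (Real.sqrt_le_sqrt ?_)⟩
  simp only [Prod.fst_add, Prod.smul_fst, smul_eq_mul, mul_one, Prod.snd_add, Prod.smul_snd,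
    smul_zero, add_zero]
  nlinarith

lemma tendsto_cocompact_of_decay {s : Set (ℝ × EuclideanSpace ℝ (Fin N))}
    {u : ℝ × EuclideanSpace ℝ (Fin N) → ℝ} (hs : ∀ z ∈ s, 0 ≤ z.1)
    (hu : ∀ ε > (0 : ℝ), ∃ M : ℝ, ∀ z ∈ s, M ≤ z.1 + ‖z.2‖ → |u z| < ε) :
    Tendsto u (cocompact _ ⊓ 𝓟 s) (𝓝 0) := by
  refine Metric.tendsto_nhds.2 fun ε hε => ?_
  obtain ⟨M, hM⟩ := hu ε hε
  filter_upwards [mem_inf_of_left (tendsto_norm_cocompact_atTop.eventually_ge_atTop M),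
    mem_inf_of_right (mem_principal_self s)] with z hzM hz
  have : ‖z‖ ≤ z.1 + ‖z.2‖ := by
    rw [Prod.norm_def, Real.norm_of_nonneg (hs z hz)]
    exact max_le (le_add_of_nonneg_right (norm_nonneg _)) (le_add_of_nonneg_left (hs z hz))
  simpa using hM z hz (hzM.trans this)

lemma le_fderiv_fst_of_isMinOn_sub {R : ℝ} {w : ℝ × EuclideanSpace ℝ (Fin N) → ℝ}
    {p : ℝ × EuclideanSpace ℝ (Fin N)} (hw : DifferentiableAt ℝ w p) {h : ℝ → ℝ} {d : ℝ}
    (hh : HasDerivAt h d p.1) (hp : p ∈ halfExterior N R)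
    (hmin : IsMinOn (fun z => w z - h z.1) (halfExterior N R) p) :
    d ≤ fderiv ℝ w p ((1 : ℝ), 0) :=
  le_fderiv_of_isMinOn_sub (h := fun t => h (p.1 + t)) hw
    (HasDerivAt.comp_const_add p.1 0 (by rwa [add_zero]))
    fun t ht => by simpa using hmin (add_smul_fst_mem_halfExterior hp ht)

lemma neg_lapH_add_sq_mul_le_of_isLocalMin {w : ℝ × EuclideanSpace ℝ (Fin N) → ℝ}
    (hw : ContDiff ℝ 2 w) {m δ κ : ℝ} {p : ℝ × EuclideanSpace ℝ (Fin N)}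
    (hmin : IsLocalMin (fun z => w z - κ * expWeight m δ z.1) p) :
    -lapH w p + m ^ 2 * (κ * expWeight m δ p.1) ≤ m ^ 2 * δ * κ := by
  have := le_lapH_of_isLocalMin_sub hw (fun x => (hasDerivAt_expWeight m δ x).const_mul κ)
    (fun x => (hasDerivAt_neg_mul_exp_neg_mul m x).const_mul κ) hmin
  rw [expWeight]
  linarith

lemma exists_neg_mul_expWeight_le {R m δ : ℝ} (hm : 0 ≤ m) (hδ : 0 < δ)
    {w : ℝ × EuclideanSpace ℝ (Fin N) → ℝ} (hw : Continuous w)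
    (hdecay : ∀ ε > (0 : ℝ), ∃ M : ℝ, ∀ z ∈ halfExterior N R, M ≤ z.1 + ‖z.2‖ → |w z| < ε)
    {z₀ : ℝ × EuclideanSpace ℝ (Fin N)} (hz₀ : z₀ ∈ halfExterior N R) (hneg : w z₀ < 0) :
    ∃ p ∈ halfExterior N R, ∃ κ < 0, w p = κ * expWeight m δ p.1 ∧
      IsMinOn (fun z => w z - κ * expWeight m δ z.1) (halfExterior N R) p ∧
      ∀ z ∈ halfExterior N R, κ * (1 + δ) ≤ w z := by
  obtain ⟨p, hp, κ, hκ, hwp, hbelow⟩ := exists_neg_mul_le_of_tendsto_zero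
    (H := fun z => expWeight m δ z.1) (isClosed_halfExterior R) hw.continuousOn
    ((continuous_expWeight m δ).comp continuous_fst).continuousOn hδ
    (fun z _ => le_expWeight m δ z.1) (tendsto_cocompact_of_decay (fun z hz => hz.1) hdecay)
    hz₀ hneg
  refine ⟨p, hp, κ, hκ, hwp, fun z hz => by simpa [hwp] using hbelow z hz, fun z hz => ?_⟩
  exact (mul_le_mul_of_nonpos_left (expWeight_le hm hz.1) hκ.le).trans (hbelow z hz)

end HalfSpace

theorem stmt15_general (N : ℕ) (m lam R : ℝ) (hlam0 : 0 < lam) (hlamm : lam < m)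
    (w : ℝ × EuclideanSpace ℝ (Fin N) → ℝ) (hw : ContDiff ℝ 2 w)
    (Ω : Set (ℝ × EuclideanSpace ℝ (Fin N)))
    (hΩ : Ω = {z | 0 ≤ z.1 ∧ R ≤ Real.sqrt (z.1 ^ 2 + ‖z.2‖ ^ 2)})
    (hsuper : ∀ z : ℝ × EuclideanSpace ℝ (Fin N),
      0 < z.1 → R < Real.sqrt (z.1 ^ 2 + ‖z.2‖ ^ 2) → 0 ≤ -lapH w z + m ^ 2 * w z)
    (hsphere : ∀ z : ℝ × EuclideanSpace ℝ (Fin N),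
      0 ≤ z.1 → Real.sqrt (z.1 ^ 2 + ‖z.2‖ ^ 2) = R → 0 ≤ w z)
    (hdecay : ∀ ε > (0 : ℝ), ∃ M : ℝ, ∀ z ∈ Ω, M ≤ z.1 + ‖z.2‖ → |w z| < ε)
    (hflat : ∀ y₀ : EuclideanSpace ℝ (Fin N), R ≤ ‖y₀‖ →
      (w (0, y₀) < 0 ∧ ∀ z ∈ Ω, w (0, y₀) ≤ w z) →
      lam * w (0, y₀) ≤ -(fderiv ℝ w (0, y₀) ((1 : ℝ), 0))) :
    ∀ z ∈ Ω, 0 ≤ w z := by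
  subst hΩ
  by_contra! ⟨p₀, hp₀Ω, hp₀⟩
  have hm : 0 < m := hlam0.trans hlamm
  obtain ⟨δ, hδ0, hδ⟩ : ∃ δ, 0 < δ ∧ lam * (1 + δ) < m :=
    ⟨(m - lam) / (2 * lam), by positivity, by field_simp; linarith⟩
  obtain ⟨p, hpΩ, κ, hκ, hwp, hmin, hbelow⟩ :=
    exists_neg_mul_expWeight_le hm.le hδ0 hw.continuous hdecay hp₀Ω hp₀
  have hwp_neg : w p < 0 := hwp ▸ mul_neg_of_neg_of_pos hκ (hδ0.trans_le (le_expWeight m δ p.1))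
  rcases hpΩ.2.eq_or_lt with hsph | hpR
  · exact hwp_neg.not_ge (hsphere p hpΩ.1 hsph.symm)
  rcases hpΩ.1.eq_or_lt with hp₁ | hp₁
  · have hp : p = (0, p.2) := Prod.ext hp₁.symm rfl
    have hwp' : w p = κ * (1 + δ) := by simp [hwp, expWeight, ← hp₁]
    have hrobin := hflat p.2 (by simpa [← hp₁] using hpR.le)
      (hp ▸ ⟨hwp_neg, fun z hz => hwp' ▸ hbelow z hz⟩)
    have hder := le_fderiv_fst_of_isMinOn_sub (hw.differentiable two_ne_zero p)
      ((hasDerivAt_expWeight m δ p.1).const_mul κ) hpΩ hmin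
    rw [← hp, hwp'] at hrobin
    simp only [← hp₁, mul_zero, Real.exp_zero, mul_one] at hder
    linarith [mul_lt_mul_of_neg_left hδ hκ]
  · have hlap := neg_lapH_add_sq_mul_le_of_isLocalMin hw
      (hmin.localize.isLocalMin (halfExterior_mem_nhds hp₁ hpR))
    rw [← hwp] at hlap
    linarith [hsuper p hp₁ hpR, mul_neg_of_neg_of_pos hκ (mul_pos (pow_pos hm 2) hδ0)]

/-- Comparison principle for the half-space operator `-Δ + m²` on the exterior
region `Ω_R⁺ = {(x,y) : x ≥ 0, √(x²+|y|²) ≥ R}`: a `C²` supersolution which is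
nonnegative on the spherical boundary, tends to `0` at infinity, and satisfies the
Robin-type condition `-∂w/∂x(0,y₀) ≥ λ w(0,y₀)` (with `0 < λ < m`) at any flat
boundary point where a negative minimum is attained, is nonnegative on all of `Ω_R⁺`. -/
theorem stmt15 (N : ℕ) (m lam R : ℝ) (hm : 0 < m) (hlam0 : 0 < lam) (hlamm : lam < m)
    (hR : 0 < R)
    (w : ℝ × EuclideanSpace ℝ (Fin N) → ℝ) (hw : ContDiff ℝ 2 w)
    (Ω : Set (ℝ × EuclideanSpace ℝ (Fin N)))
    (hΩ : Ω = {z | 0 ≤ z.1 ∧ R ≤ Real.sqrt (z.1 ^ 2 + ‖z.2‖ ^ 2)})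
    (hsuper : ∀ z : ℝ × EuclideanSpace ℝ (Fin N),
      0 < z.1 → R < Real.sqrt (z.1 ^ 2 + ‖z.2‖ ^ 2) → 0 ≤ -lapH w z + m ^ 2 * w z)
    (hsphere : ∀ z : ℝ × EuclideanSpace ℝ (Fin N),
      0 ≤ z.1 → Real.sqrt (z.1 ^ 2 + ‖z.2‖ ^ 2) = R → 0 ≤ w z)
    (hdecay : ∀ ε > (0 : ℝ), ∃ M : ℝ, ∀ z ∈ Ω, M ≤ z.1 + ‖z.2‖ → |w z| < ε)
    (hflat : ∀ y₀ : EuclideanSpace ℝ (Fin N), R ≤ ‖y₀‖ →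
      (w (0, y₀) < 0 ∧ ∀ z ∈ Ω, w (0, y₀) ≤ w z) →
      lam * w (0, y₀) ≤ -(fderiv ℝ w (0, y₀) ((1 : ℝ), 0))) :
    ∀ z ∈ Ω, 0 ≤ w z :=
  stmt15_general N m lam R hlam0 hlamm w hw Ω hΩ hsuper hsphere hdecay hflat
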